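/- arXiv:2501.10061 — 4 statements merged into one kernel-verified Lean document; each statement's English description precedes it below -/
import Mathlib

section
/- Let μ_φ, μ_1 : [0,1] → [0,∞) be decreasing functions with ∫_0^1 μ_φ(t) dt = ∫_0^1 μ_1(t) dt (both finite), and suppose there exists a ∈ [0,1] with μ_φ(t) ≥ μ_1(t) for t ≤ a and μ_φ(t) ≤ μ_1(t) for t ≥ a. Let Φ: [0,1] → ℝ be differentiable with Φ' strictly increasing, and suppose ∫_0^1 μ_φ(t) Φ'(t) dt = ∫_0^1 μ_1(t) Φ'(t) dt (both finite). Then μ_φ(t) = μ_1(t) for almost every t ∈ [0,1]. -/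
open Set MeasureTheory intervalIntegral
open scoped ENNReal

/-!
On `[0,1]` put `h t = (μφ t - μ1 t) * (Φ' t - Φ' a)`. The single crossing at `a` and the
monotonicity of `Φ'` make `h ≤ 0`, while the two moment identities give `∫ h = 0`; hence `h = 0`
almost everywhere, and strict monotonicity of `Φ'` forces `μφ = μ1` off the null set `{a}`.
-/

theorem setIntegral_eq_zero_iff_of_nonpos_ae {X : Type*} [MeasurableSpace X] {μ : Measure X}
    {s : Set X} {f : X → ℝ} (hf : f ≤ᵐ[μ.restrict s] 0) (hfi : IntegrableOn f s μ) :
    ∫ x in s, f x ∂μ = 0 ↔ f =ᵐ[μ.restrict s] 0 := by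
  have hneg : 0 ≤ᵐ[μ.restrict s] -f := by
    filter_upwards [hf] with x hx using neg_nonneg.2 hx
  have hiff := setIntegral_eq_zero_iff_of_nonneg_ae hneg hfi.neg
  simp only [Pi.neg_apply, MeasureTheory.integral_neg, neg_eq_zero] at hiff
  rw [hiff]
  exact ⟨fun h => by simpa using h.neg, fun h => by simpa using h.neg⟩

theorem integral_sub_mul_sub_const_eq_zero {α : Type*} [MeasurableSpace α] {μ : Measure α}
    {f k g : α → ℝ} (c : ℝ) (hf : Integrable f μ) (hk : Integrable k μ) (hg : MemLp g ∞ μ)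
    (h₀ : ∫ x, f x ∂μ = ∫ x, k x ∂μ) (h₁ : ∫ x, f x * g x ∂μ = ∫ x, k x * g x ∂μ) :
    ∫ x, (f x - k x) * (g x - c) ∂μ = 0 := by
  have hfg : Integrable (fun x => f x * g x) μ := hf.mul_of_top_left hg
  have hkg : Integrable (fun x => k x * g x) μ := hk.mul_of_top_left hg
  calc ∫ x, (f x - k x) * (g x - c) ∂μ
      = ∫ x, (f x * g x - k x * g x) - c * (f x - k x) ∂μ := by congr 1; ext x; ring
    _ = ((∫ x, f x * g x ∂μ) - ∫ x, k x * g x ∂μ) - c * ((∫ x, f x ∂μ) - ∫ x, k x ∂μ) := by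
      rw [integral_sub (f := fun x => f x * g x - k x * g x) (g := fun x => c * (f x - k x))
        (hfg.sub hkg) ((hf.sub hk).const_mul c), integral_sub hfg hkg,
        MeasureTheory.integral_const_mul, integral_sub hf hk]
    _ = 0 := by rw [h₀, h₁]; ring

theorem sub_mul_sub_nonpos_of_crossing {α : Type*} [LinearOrder α] {f k g : α → ℝ} {s : Set α}
    {a t : α} (hg : MonotoneOn g s) (ha : a ∈ s) (ht : t ∈ s) (h₁ : t ≤ a → k t ≤ f t)
    (h₂ : a ≤ t → f t ≤ k t) : (f t - k t) * (g t - g a) ≤ 0 := by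
  rcases le_total t a with hta | hat
  · exact mul_nonpos_of_nonneg_of_nonpos (sub_nonneg.2 (h₁ hta)) (sub_nonpos.2 (hg ht ha hta))
  · exact mul_nonpos_of_nonpos_of_nonneg (sub_nonpos.2 (h₂ hat)) (sub_nonneg.2 (hg ha ht hat))

theorem rigidity_of_distribution_functions_general
    (μφ μ1 : ℝ → ℝ)
    (hμφ_anti : AntitoneOn μφ (Icc 0 1)) (hμ1_anti : AntitoneOn μ1 (Icc 0 1))
    (hint : ∫ t in (0:ℝ)..1, μφ t = ∫ t in (0:ℝ)..1, μ1 t)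
    (a : ℝ) (ha : a ∈ Icc (0:ℝ) 1)
    (hcross₁ : ∀ t ∈ Icc (0:ℝ) a, μ1 t ≤ μφ t)
    (hcross₂ : ∀ t ∈ Icc a 1, μφ t ≤ μ1 t)
    (Φ : ℝ → ℝ)
    (hΦ' : StrictMonoOn (deriv Φ) (Icc 0 1))
    (hintΦ : ∫ t in (0:ℝ)..1, μφ t * deriv Φ t = ∫ t in (0:ℝ)..1, μ1 t * deriv Φ t) :
    ∀ᵐ t : ℝ, t ∈ Icc (0:ℝ) 1 → μφ t = μ1 t := by
  set g := deriv Φ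
  have hg : MonotoneOn g (Icc 0 1) := hΦ'.monotoneOn
  have hgLp : MemLp g ∞ (volume.restrict (Icc 0 1)) := hg.memLp_isCompact isCompact_Icc
  have hiφ : IntegrableOn μφ (Icc 0 1) := hμφ_anti.integrableOn_isCompact isCompact_Icc
  have hi1 : IntegrableOn μ1 (Icc 0 1) := hμ1_anti.integrableOn_isCompact isCompact_Icc
  have interval_eq_Icc : ∀ f : ℝ → ℝ, ∫ t in (0:ℝ)..1, f t = ∫ t in Icc (0:ℝ) 1, f t := fun f => by
    rw [integral_of_le zero_le_one, integral_Icc_eq_integral_Ioc]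
  have hzero : ∫ t in Icc 0 1, (μφ t - μ1 t) * (g t - g a) = 0 :=
    integral_sub_mul_sub_const_eq_zero (g a) hiφ hi1 hgLp
      (by simpa only [interval_eq_Icc] using hint) (by simpa only [interval_eq_Icc] using hintΦ)
  have hnonpos : (fun t => (μφ t - μ1 t) * (g t - g a)) ≤ᵐ[volume.restrict (Icc 0 1)] 0 := by
    filter_upwards [ae_restrict_mem measurableSet_Icc] with t ht
    exact sub_mul_sub_nonpos_of_crossing hg ha ht (fun h => hcross₁ t ⟨ht.1, h⟩)
      (fun h => hcross₂ t ⟨h, ht.2⟩)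
  have hae := (setIntegral_eq_zero_iff_of_nonpos_ae hnonpos
    ((hiφ.sub hi1).mul_of_top_left (hgLp.sub (memLp_top_const _)))).1 hzero
  rw [← ae_restrict_iff' measurableSet_Icc]
  filter_upwards [hae, ae_restrict_mem measurableSet_Icc, (volume.restrict _).ae_ne a]
    with t h0 ht hta
  exact sub_eq_zero.1 ((mul_eq_zero.1 h0).resolve_right (sub_ne_zero.2 (hΦ'.injOn.ne ht ha hta)))

/-- Rigidity lemma: if two decreasing functions on `[0,1]` have the same integral, the same
integral against `Φ'` for a differentiable `Φ` with strictly increasing derivative, and they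
cross exactly once (in the sense that `μφ ≥ μ1` before some `a` and `μφ ≤ μ1` after `a`),
then they agree almost everywhere on `[0,1]`. -/
theorem rigidity_of_distribution_functions
    (μφ μ1 : ℝ → ℝ)
    (hμφ_anti : AntitoneOn μφ (Icc 0 1)) (hμ1_anti : AntitoneOn μ1 (Icc 0 1))
    (hμφ_nn : ∀ t ∈ Icc (0:ℝ) 1, 0 ≤ μφ t) (hμ1_nn : ∀ t ∈ Icc (0:ℝ) 1, 0 ≤ μ1 t)
    (hint : ∫ t in (0:ℝ)..1, μφ t = ∫ t in (0:ℝ)..1, μ1 t)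
    (a : ℝ) (ha : a ∈ Icc (0:ℝ) 1)
    (hcross₁ : ∀ t ∈ Icc (0:ℝ) a, μ1 t ≤ μφ t)
    (hcross₂ : ∀ t ∈ Icc a 1, μφ t ≤ μ1 t)
    (Φ : ℝ → ℝ) (hΦ : DifferentiableOn ℝ Φ (Icc 0 1))
    (hΦ' : StrictMonoOn (deriv Φ) (Icc 0 1))
    (hintΦ : ∫ t in (0:ℝ)..1, μφ t * deriv Φ t = ∫ t in (0:ℝ)..1, μ1 t * deriv Φ t) :
    ∀ᵐ t : ℝ, t ∈ Icc (0:ℝ) 1 → μφ t = μ1 t :=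
  rigidity_of_distribution_functions_general μφ μ1 hμφ_anti hμ1_anti hint a ha hcross₁ hcross₂ Φ hΦ'
    hintΦ
end

section
/- Let G: [0,∞) → ℝ be continuous, differentiable on (0,∞), with G(0) = 0, lim_{s→∞} G(s) = 0, and G(s) < 0 for all sufficiently small s > 0. Suppose h: (0,∞) → (0,∞) is positive and the function s ↦ h(s)G'(s) is monotone increasing on (0,∞). Then G(s) < 0 for all s > 0. -/
open Set Filter

/-- Abstract comparison lemma underlying the Faber–Krahn argument: if `G` is continuous on
`[0,∞)`, differentiable on `(0,∞)`, vanishes at `0` and at infinity, is negative for all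
sufficiently small `s > 0`, and `h·G'` is monotone increasing on `(0,∞)` for some positive
weight `h`, then `G < 0` on all of `(0,∞)`. -/
theorem neg_of_weighted_deriv_monotone
    (G : ℝ → ℝ) (hGc : ContinuousOn G (Ici 0)) (hGd : DifferentiableOn ℝ G (Ioi 0))
    (hG0 : G 0 = 0) (hlim : Tendsto G atTop (nhds 0))
    (hneg : ∃ ε > 0, ∀ s ∈ Ioo (0:ℝ) ε, G s < 0)
    (h : ℝ → ℝ) (hh : ∀ s ∈ Ioi (0:ℝ), 0 < h s)
    (hmono : MonotoneOn (fun s => h s * deriv G s) (Ioi 0)) :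
    ∀ s > 0, G s < 0 := by
  intro s hs
  by_contra hcon
  push_neg at hcon
  obtain ⟨ε, hε, hneg⟩ := hneg
  set a := min (ε / 2) (s / 2) with ha
  have ha0 : 0 < a := lt_min (by linarith) (by linarith)
  have haε : a < ε := lt_of_le_of_lt (min_le_left _ _) (by linarith)
  have has : a < s := lt_of_le_of_lt (min_le_right _ _) (by linarith)
  have hGa : G a < 0 := hneg a ⟨ha0, haε⟩
  obtain ⟨s₁, hs₁, hd₁⟩ := exists_deriv_eq_slope G has
    (hGc.mono (fun x hx => le_trans ha0.le hx.1))
    (hGd.mono (fun x hx => lt_trans ha0 hx.1))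
  have hs₁0 : (0:ℝ) < s₁ := lt_trans ha0 hs₁.1
  have hd₁pos : 0 < deriv G s₁ := by
    rw [hd₁]; exact div_pos (by linarith) (by linarith)
  have hc : 0 < h s₁ * deriv G s₁ := mul_pos (hh s₁ hs₁0) hd₁pos
  have hpos : ∀ t ∈ Ioi s₁, 0 < deriv G t := by
    intro t ht
    have ht0 : (0:ℝ) < t := lt_trans hs₁0 ht
    have hmt : h s₁ * deriv G s₁ ≤ h t * deriv G t := hmono hs₁0 ht0 (le_of_lt ht)
    have hht := hh t ht0
    nlinarith
  have smono : StrictMonoOn G (Ici s₁) :=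
    strictMonoOn_of_deriv_pos (convex_Ici s₁)
      (hGc.mono (fun x hx => le_trans hs₁0.le hx))
      (by rw [interior_Ici]; exact hpos)
  have hss₁ : s₁ < s := hs₁.2
  have hGs1 : 0 < G (s + 1) :=
    lt_of_le_of_lt hcon (smono (le_of_lt hss₁) (by simp; linarith) (by linarith))
  have hle : G (s + 1) ≤ 0 := by
    refine ge_of_tendsto hlim ?_
    filter_upwards [eventually_ge_atTop (s + 1)] with t ht
    exact smono.monotoneOn (by simp; linarith) (by simp; linarith) ht
  linarith
end

section
/- Let G: [0,∞) → ℝ be continuously differentiable with G(0) = 0, lim_{s→∞} G(s) = 0, G'(0) ≤ 0, and suppose s ↦ (1+s^{1/N})^α G'(s) is increasing on (0,∞) for some fixed N ≥ 1 and α > N. Then G(s) ≤ 0 for all s ≥ 0, and if G(s₀) = 0 for some s₀ > 0 then G ≡ 0 on [0,∞). -/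
/-!
If `G` attains its maximum over `[0, ∞)` at some `m > 0`, then `G'(m) = 0`; as the weight is
positive and weight times `G'` increases, `G' ≤ 0` on `(0, m]` and `G' ≥ 0` on `[m, ∞)`, so `G`
decreases to its maximum and increases after it, i.e. `G` is constant. A positive value of `G`
would, since `G → 0` at `∞`, produce such a maximum, contradicting `G 0 = 0`; once `G ≤ 0`, a
positive zero of `G` is such a maximum.
-/

open Set Filter Topology

section SignChange

variable {α β : Type*} [Preorder α] [Semiring β] [LinearOrder β] [PosMulStrictMono β]
  {s : Set α} {w f : α → β} {x m : α}

theorem nonpos_of_monotoneOn_mul_of_eq_zero (hmono : MonotoneOn (fun x => w x * f x) s)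
    (hw : ∀ x ∈ s, 0 < w x) (hx : x ∈ s) (hm : m ∈ s) (hfm : f m = 0) (hxm : x ≤ m) :
    f x ≤ 0 := by
  have h := hmono hx hm hxm
  simp only [hfm, mul_zero] at h
  exact nonpos_of_mul_nonpos_right h (hw x hx)

theorem nonneg_of_monotoneOn_mul_of_eq_zero (hmono : MonotoneOn (fun x => w x * f x) s)
    (hw : ∀ x ∈ s, 0 < w x) (hx : x ∈ s) (hm : m ∈ s) (hfm : f m = 0) (hmx : m ≤ x) :
    0 ≤ f x := by
  have h := hmono hm hx hmx
  simp only [hfm, mul_zero] at h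
  exact nonneg_of_mul_nonneg_right h (hw x hx)

end SignChange

theorem exists_isMaxOn_Ici_of_tendsto {G : ℝ → ℝ} {a L x₀ : ℝ} (hGc : ContinuousOn G (Ici a))
    (hlim : Tendsto G atTop (𝓝 L)) (hx₀ : x₀ ∈ Ici a) (hL : L < G x₀) :
    ∃ m ∈ Ici a, IsMaxOn G (Ici a) m := by
  refine hGc.exists_isMaxOn' isClosed_Ici hx₀ ?_
  rw [cocompact_eq_atBot_atTop, inf_sup_right, (disjoint_atBot_principal_Ici a).eq_bot,
    bot_sup_eq]
  exact (hlim.eventually (ge_mem_nhds hL)).filter_mono inf_le_left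

section WeightedDeriv

variable {w G : ℝ → ℝ} {m : ℝ}

theorem antitoneOn_Icc_of_deriv_eq_zero (hGc : ContinuousOn G (Ici 0))
    (hGd : DifferentiableOn ℝ G (Ioi 0)) (hw : ∀ x ∈ Ioi 0, 0 < w x)
    (hmono : MonotoneOn (fun x => w x * deriv G x) (Ioi 0)) (hm : 0 < m)
    (hdm : deriv G m = 0) : AntitoneOn G (Icc 0 m) := by
  refine antitoneOn_of_deriv_nonpos (convex_Icc 0 m) (hGc.mono Icc_subset_Ici_self)
    (hGd.mono ?_) fun x hx => ?_
  · exact interior_Icc.trans_subset Ioo_subset_Ioi_self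
  · rw [interior_Icc] at hx
    exact nonpos_of_monotoneOn_mul_of_eq_zero hmono hw hx.1 hm hdm hx.2.le

theorem monotoneOn_Ici_of_deriv_eq_zero (hGc : ContinuousOn G (Ici 0))
    (hGd : DifferentiableOn ℝ G (Ioi 0)) (hw : ∀ x ∈ Ioi 0, 0 < w x)
    (hmono : MonotoneOn (fun x => w x * deriv G x) (Ioi 0)) (hm : 0 < m)
    (hdm : deriv G m = 0) : MonotoneOn G (Ici m) := by
  refine monotoneOn_of_deriv_nonneg (convex_Ici m) (hGc.mono (Ici_subset_Ici.mpr hm.le))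
    (hGd.mono ?_) fun x hx => ?_
  · exact interior_Ici.trans_subset (Ioi_subset_Ioi hm.le)
  · rw [interior_Ici] at hx
    exact nonneg_of_monotoneOn_mul_of_eq_zero hmono hw (hm.trans hx) hm hdm hx.le

theorem eqOn_const_of_isMaxOn_Ici (hGc : ContinuousOn G (Ici 0))
    (hGd : DifferentiableOn ℝ G (Ioi 0)) (hw : ∀ x ∈ Ioi 0, 0 < w x)
    (hmono : MonotoneOn (fun x => w x * deriv G x) (Ioi 0)) (hm : 0 < m)
    (hmax : IsMaxOn G (Ici 0) m) : EqOn G (fun _ => G m) (Ici 0) := by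
  have hdm : deriv G m = 0 := (hmax.isLocalMax (Ici_mem_nhds hm)).deriv_eq_zero
  intro x hx
  refine le_antisymm (hmax hx) ?_
  rcases le_total x m with hxm | hmx
  · exact antitoneOn_Icc_of_deriv_eq_zero hGc hGd hw hmono hm hdm ⟨hx, hxm⟩
      ⟨hm.le, le_rfl⟩ hxm
  · exact monotoneOn_Ici_of_deriv_eq_zero hGc hGd hw hmono hm hdm self_mem_Ici hmx hmx

end WeightedDeriv

theorem nonpos_and_rigidity_of_weighted_deriv_monotone_general
    (N : ℕ) (α : ℝ)
    (G : ℝ → ℝ) (hG : ContDiffOn ℝ 1 G (Ici 0))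
    (hG0 : G 0 = 0) (hlim : Tendsto G atTop (nhds 0))
    (hmono : MonotoneOn
      (fun s => (1 + s ^ ((1:ℝ)/N)) ^ α * derivWithin G (Ici 0) s) (Ioi 0)) :
    (∀ s ≥ (0:ℝ), G s ≤ 0) ∧ (∀ s₀ > (0:ℝ), G s₀ = 0 → ∀ s ≥ (0:ℝ), G s = 0) := by
  have hGc : ContinuousOn G (Ici 0) := hG.continuousOn
  have hGd : DifferentiableOn ℝ G (Ioi 0) :=
    (hG.differentiableOn one_ne_zero).mono Ioi_subset_Ici_self
  have hw : ∀ x ∈ Ioi (0:ℝ), 0 < (1 + x ^ ((1:ℝ)/N)) ^ α := fun x (hx : 0 < x) => by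
    positivity
  have hmono' : MonotoneOn (fun s => (1 + s ^ ((1:ℝ)/N)) ^ α * deriv G s) (Ioi 0) :=
    hmono.congr fun x hx => congrArg _ (derivWithin_of_mem_nhds (Ici_mem_nhds hx))
  have hconst : ∀ m > 0, IsMaxOn G (Ici 0) m → EqOn G (fun _ => G m) (Ici 0) :=
    fun m hm => eqOn_const_of_isMaxOn_Ici hGc hGd hw hmono' hm
  have hnonpos : ∀ s ≥ (0:ℝ), G s ≤ 0 := by
    by_contra! ⟨s, hs, hGs⟩
    obtain ⟨m, hm, hmax⟩ := exists_isMaxOn_Ici_of_tendsto hGc hlim hs hGs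
    have hGsm : G s ≤ G m := hmax hs
    have hm0 : 0 < m := hm.lt_of_ne' fun h => by rw [h] at hGsm; linarith
    have hG0m : G 0 = G m := hconst m hm0 hmax self_mem_Ici
    linarith
  refine ⟨hnonpos, fun s₀ hs₀ hGs₀ s hs => ?_⟩
  rw [hconst s₀ hs₀ (fun x hx => hGs₀ ▸ hnonpos x hx) hs, hGs₀]

/-- Dichotomy used in the Faber–Krahn theorem for Bergman spaces: if `G` is `C¹` on `[0,∞)`
with `G(0) = 0`, `G(s) → 0` as `s → ∞`, `G'(0) ≤ 0`, and `s ↦ (1+s^{1/N})^α G'(s)` is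
increasing on `(0,∞)` (for some `N ≥ 1`, `α > N`), then `G ≤ 0` everywhere, and if `G`
vanishes at some positive point then `G` vanishes identically. -/
theorem nonpos_and_rigidity_of_weighted_deriv_monotone
    (N : ℕ) (hN : 1 ≤ N) (α : ℝ) (hα : (N : ℝ) < α)
    (G : ℝ → ℝ) (hG : ContDiffOn ℝ 1 G (Ici 0))
    (hG0 : G 0 = 0) (hlim : Tendsto G atTop (nhds 0))
    (hD0 : derivWithin G (Ici 0) 0 ≤ 0)
    (hmono : MonotoneOn
      (fun s => (1 + s ^ ((1:ℝ)/N)) ^ α * derivWithin G (Ici 0) s) (Ioi 0)) :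
    (∀ s ≥ (0:ℝ), G s ≤ 0) ∧ (∀ s₀ > (0:ℝ), G s₀ = 0 → ∀ s ≥ (0:ℝ), G s = 0) :=
  nonpos_and_rigidity_of_weighted_deriv_monotone_general N α G hG hG0 hlim hmono
end

section
/- Let (X, m) be a measure space, u: X → [0,∞) measurable with distribution function μ(t) = m({u > t}) finite for t > 0, E ⊂ X measurable with m(E) = m({u > τ}) for some τ > 0, and suppose ∫_E u dm = ∫_{{u > τ}} u dm < ∞. If m({u = τ}) = 0, then m(E Δ {u > τ}) = 0, i.e., E coincides with the superlevel set up to measure zero. -/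
open MeasureTheory Set

/-- Equality case of the bathtub principle: if `E` has the same measure as the superlevel
set `{u > τ}` (τ > 0), the integrals of `u ≥ 0` over `E` and over `{u > τ}` agree and are
finite, and the level set `{u = τ}` is null, then `E` coincides with `{u > τ}` up to a set
of measure zero. -/
theorem bathtub_equality_case {X : Type*} [MeasurableSpace X] (m : Measure X)
    (u : X → ℝ) (hu : Measurable u) (hnn : ∀ x, 0 ≤ u x)
    (τ : ℝ) (hτ : 0 < τ) (hfin : m {x | τ < u x} ≠ ⊤)
    (E : Set X) (hE : MeasurableSet E) (hmE : m E = m {x | τ < u x})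
    (hint : ∫⁻ x in E, ENNReal.ofReal (u x) ∂m
      = ∫⁻ x in {x | τ < u x}, ENNReal.ofReal (u x) ∂m)
    (hIfin : ∫⁻ x in {x | τ < u x}, ENNReal.ofReal (u x) ∂m ≠ ⊤)
    (hlevel : m {x | u x = τ} = 0) :
    m (symmDiff E {x | τ < u x}) = 0 := by
  set A : Set X := {x | τ < u x} with hA_def
  have hA : MeasurableSet A := measurableSet_lt measurable_const hu
  set f : X → ENNReal := fun x => ENNReal.ofReal (u x) with hf_def
  have hfm : Measurable f := hu.ennreal_ofReal
  -- measures of the two difference pieces agree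
  have hmeq : m (E \ A) = m (A \ E) := by
    have h1 : m (E ∩ A) + m (E \ A) = m E := measure_inter_add_diff E hA
    have h2 : m (A ∩ E) + m (A \ E) = m A := measure_inter_add_diff A hE
    have hIA : m (E ∩ A) ≠ ⊤ := by
      refine ne_top_of_le_ne_top hfin ?_
      exact measure_mono inter_subset_right
    rw [inter_comm] at h2
    have := h1.trans (hmE.trans h2.symm)
    exact (ENNReal.add_right_inj hIA).mp this
  -- integrals over the two difference pieces agree
  have hieq : ∫⁻ x in E \ A, f x ∂m = ∫⁻ x in A \ E, f x ∂m := by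
    have h1 : ∫⁻ x in E ∩ A, f x ∂m + ∫⁻ x in E \ A, f x ∂m = ∫⁻ x in E, f x ∂m :=
      lintegral_inter_add_diff f E hA
    have h2 : ∫⁻ x in A ∩ E, f x ∂m + ∫⁻ x in A \ E, f x ∂m = ∫⁻ x in A, f x ∂m :=
      lintegral_inter_add_diff f A hE
    have hIA : ∫⁻ x in E ∩ A, f x ∂m ≠ ⊤ := by
      refine ne_top_of_le_ne_top hIfin ?_
      exact lintegral_mono_set inter_subset_right
    rw [inter_comm] at h2
    have := h1.trans (hint.trans h2.symm)
    exact (ENNReal.add_right_inj hIA).mp this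
  -- on E \ A, u ≤ τ, so the integral is at most τ * m (E \ A)
  have hT : ∫⁻ x in E \ A, f x ∂m ≤ ENNReal.ofReal τ * m (E \ A) := by
    rw [← setLIntegral_const (E \ A) (ENNReal.ofReal τ)]
    refine setLIntegral_mono measurable_const fun x hx => ?_
    exact ENNReal.ofReal_le_ofReal (le_of_not_gt hx.2)
  -- on A \ E, u ≥ τ, so the integral is at least τ * m (A \ E)
  have hS : ENNReal.ofReal τ * m (A \ E) ≤ ∫⁻ x in A \ E, f x ∂m := by
    rw [← setLIntegral_const (A \ E) (ENNReal.ofReal τ)]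
    refine setLIntegral_mono hfm fun x hx => ?_
    exact ENNReal.ofReal_le_ofReal (le_of_lt hx.1)
  -- hence the integral over A \ E equals τ * m (A \ E)
  have hSeq : ∫⁻ x in A \ E, f x ∂m = ENNReal.ofReal τ * m (A \ E) := by
    refine le_antisymm ?_ hS
    calc ∫⁻ x in A \ E, f x ∂m = ∫⁻ x in E \ A, f x ∂m := hieq.symm
      _ ≤ ENNReal.ofReal τ * m (E \ A) := hT
      _ = ENNReal.ofReal τ * m (A \ E) := by rw [hmeq]
  -- finiteness of the constant integral
  have hSfin : ENNReal.ofReal τ * m (A \ E) ≠ ⊤ := by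
    refine ENNReal.mul_ne_top ENNReal.ofReal_ne_top ?_
    exact ne_top_of_le_ne_top hfin (measure_mono diff_subset)
  -- conclude m (A \ E) = 0 from strict inequality u > τ on A \ E
  have hSzero : m (A \ E) = 0 := by
    have hcfin : ∫⁻ _ in A \ E, ENNReal.ofReal τ ∂m ≠ ⊤ := by
      rw [setLIntegral_const]; exact hSfin
    have hle : (fun _ => ENNReal.ofReal τ) ≤ᵐ[m.restrict (A \ E)] f := by
      filter_upwards [ae_restrict_mem (hA.diff hE)] with x hx
      exact ENNReal.ofReal_le_ofReal (le_of_lt hx.1)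
    have hsub : ∫⁻ x in A \ E, (f x - ENNReal.ofReal τ) ∂m = 0 := by
      rw [lintegral_sub measurable_const hcfin hle, hSeq, setLIntegral_const, tsub_self]
    have := (lintegral_eq_zero_iff (hfm.sub measurable_const)).mp hsub
    have hres : m.restrict (A \ E) (A \ E) = 0 := by
      refine measure_mono_null (fun x hx => ?_) this
      have hlt : ENNReal.ofReal τ < f x :=
        (ENNReal.ofReal_lt_ofReal_iff (hτ.trans hx.1)).mpr hx.1
      exact fun h0 => (tsub_pos_iff_lt.mpr hlt).ne' h0
    rwa [Measure.restrict_apply_self] at hres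
  have hTzero : m (E \ A) = 0 := hmeq.trans hSzero
  rw [symmDiff_def]
  exact measure_union_null hTzero hSzero
end
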